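/- arXiv:1706.04267 — 2 statements merged into one kernel-verified Lean document; each statement's English description precedes it below -/
import Mathlib

section
/- CVaR is positively homogeneous and subadditive: for integrable L₁, L₂ and α ∈ (0,1], CVaR_α(λL) = λ·CVaR_α(L) for λ ≥ 0, and CVaR_α(L₁ + L₂) ≤ CVaR_α(L₁) + CVaR_α(L₂). -/
open MeasureTheory Pointwise

/-- Rockafellar–Uryasev CVaR of a loss `L` at level `α`. -/
noncomputable def CVaR {Ω : Type*} [MeasurableSpace Ω] (P : Measure Ω) (α : ℝ)
    (L : Ω → ℝ) : ℝ :=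
  ⨅ τ : ℝ, ∫ ω, (-τ + (1 / α) * max (L ω + τ) 0) ∂P

noncomputable def cvarInt {Ω : Type*} [MeasurableSpace Ω] (P : Measure Ω) (α : ℝ)
    (L : Ω → ℝ) (τ : ℝ) : ℝ :=
  ∫ ω, (-τ + (1 / α) * max (L ω + τ) 0) ∂P

lemma cvarInt_integrable {Ω : Type*} [MeasurableSpace Ω] (P : Measure Ω)
    [IsProbabilityMeasure P] (α : ℝ) {L : Ω → ℝ} (hL : Integrable L P) (τ : ℝ) :
    Integrable (fun ω => -τ + (1 / α) * max (L ω + τ) 0) P :=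
  (integrable_const _).add (((hL.add (integrable_const τ)).pos_part).const_mul _)

lemma cvarInt_ge {Ω : Type*} [MeasurableSpace Ω] (P : Measure Ω)
    [IsProbabilityMeasure P] {α : ℝ} (hα : α ∈ Set.Ioc (0 : ℝ) 1)
    {L : Ω → ℝ} (hL : Integrable L P) (τ : ℝ) :
    ∫ ω, L ω ∂P ≤ cvarInt P α L τ := by
  obtain ⟨hα0, hα1⟩ := hα
  have h1α : 1 ≤ 1 / α := by
    rw [le_div_iff₀ hα0]; linarith
  refine integral_mono hL (cvarInt_integrable P α hL τ) ?_
  intro ω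
  have hm : L ω + τ ≤ max (L ω + τ) 0 := le_max_left _ _
  have hm0 : (0:ℝ) ≤ max (L ω + τ) 0 := le_max_right _ _
  nlinarith [mul_le_mul_of_nonneg_right h1α hm0]

lemma cvarInt_bddBelow {Ω : Type*} [MeasurableSpace Ω] (P : Measure Ω)
    [IsProbabilityMeasure P] {α : ℝ} (hα : α ∈ Set.Ioc (0 : ℝ) 1)
    {L : Ω → ℝ} (hL : Integrable L P) :
    BddBelow (Set.range (cvarInt P α L)) :=
  ⟨∫ ω, L ω ∂P, by rintro x ⟨τ, rfl⟩; exact cvarInt_ge P hα hL τ⟩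

/-- CVaR is positively homogeneous and subadditive. -/
theorem cvar_pos_homog_and_subadditive {Ω : Type*} [MeasurableSpace Ω]
    (P : Measure Ω) [IsProbabilityMeasure P] (α : ℝ)
    (hα : α ∈ Set.Ioc (0 : ℝ) 1) :
    (∀ (L : Ω → ℝ) (lam : ℝ), Integrable L P → 0 ≤ lam →
      CVaR P α (fun ω => lam * L ω) = lam * CVaR P α L) ∧
    (∀ L₁ L₂ : Ω → ℝ, Integrable L₁ P → Integrable L₂ P →
      CVaR P α (fun ω => L₁ ω + L₂ ω) ≤ CVaR P α L₁ + CVaR P α L₂) := by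
  have hCVaR : ∀ L : Ω → ℝ, CVaR P α L = ⨅ τ : ℝ, cvarInt P α L τ := fun _ => rfl
  constructor
  · intro L lam hL hlam
    rcases eq_or_lt_of_le hlam with h0 | hpos
    · -- lam = 0
      subst h0
      simp only [zero_mul]
      rw [hCVaR]
      refine le_antisymm ?_ ?_
      · have := ciInf_le (cvarInt_bddBelow P hα (integrable_const (0:ℝ))) (0:ℝ)
        calc ⨅ τ : ℝ, cvarInt P α (fun _ => (0:ℝ)) τ ≤ cvarInt P α (fun _ => (0:ℝ)) 0 := this
          _ = 0 := by simp [cvarInt]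
      · refine le_ciInf fun τ => ?_
        have := cvarInt_ge P hα (integrable_const (0:ℝ)) τ
        simpa using this
    · -- lam > 0
      rw [hCVaR, hCVaR]
      have hrw : ∀ τ : ℝ, cvarInt P α (fun ω => lam * L ω) τ
          = lam * cvarInt P α L (τ / lam) := by
        intro τ
        rw [cvarInt, cvarInt, ← integral_const_mul]
        congr 1
        funext ω
        have hmax : lam * max (L ω + τ / lam) 0 = max (lam * L ω + τ) 0 := by
          rw [mul_max_of_nonneg _ _ hlam, mul_zero, mul_add,
            mul_div_cancel₀ _ (ne_of_gt hpos)]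
        rw [mul_add, mul_neg, mul_div_cancel₀ _ (ne_of_gt hpos), ← mul_assoc,
          mul_comm lam (1/α), mul_assoc, hmax]
      simp only [hrw]
      have hsurj : Function.Surjective (fun τ : ℝ => τ / lam) :=
        fun y => ⟨y * lam, by field_simp⟩
      rw [iInf, iInf]
      have hrange : Set.range (fun τ : ℝ => lam * cvarInt P α L (τ / lam))
          = lam • Set.range (cvarInt P α L) := by
        have hc : (fun τ : ℝ => lam * cvarInt P α L (τ / lam))
            = ((fun x => lam * x) ∘ cvarInt P α L) ∘ (fun τ : ℝ => τ / lam) := rfl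
        rw [hc, hsurj.range_comp, Set.range_comp, ← Set.image_smul]
        rfl
      rw [hrange, Real.sInf_smul_of_nonneg hlam, smul_eq_mul]
  · intro L₁ L₂ h1 h2
    have key : ∀ τ₁ τ₂ : ℝ, cvarInt P α (fun ω => L₁ ω + L₂ ω) (τ₁ + τ₂)
        ≤ cvarInt P α L₁ τ₁ + cvarInt P α L₂ τ₂ := by
      intro τ₁ τ₂
      rw [cvarInt, cvarInt, cvarInt, ← integral_add (cvarInt_integrable P α h1 τ₁)
        (cvarInt_integrable P α h2 τ₂)]
      refine integral_mono (cvarInt_integrable P α (h1.add h2) _)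
        ((cvarInt_integrable P α h1 τ₁).add (cvarInt_integrable P α h2 τ₂)) ?_
      intro ω
      have hmax : max (L₁ ω + L₂ ω + (τ₁ + τ₂)) 0
          ≤ max (L₁ ω + τ₁) 0 + max (L₂ ω + τ₂) 0 := by
        apply max_le
        · have := le_max_left (L₁ ω + τ₁) 0
          have := le_max_left (L₂ ω + τ₂) 0
          linarith
        · have := le_max_right (L₁ ω + τ₁) 0
          have := le_max_right (L₂ ω + τ₂) 0
          linarith
      have hα' : (0:ℝ) ≤ 1 / α := by
        have := hα.1; positivity
      have := mul_le_mul_of_nonneg_left hmax hα'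
      simp only []
      linarith
    rw [hCVaR, hCVaR, hCVaR]
    refine le_ciInf_add_ciInf fun τ₁ τ₂ => ?_
    exact (ciInf_le (cvarInt_bddBelow P hα (h1.add h2)) (τ₁ + τ₂)).trans (key τ₁ τ₂)
end

section
/- Weak duality for the DRO inner problem: for the empirical distribution P̂_N = (1/N)Σᵢ δ_{ξ̂ᵢ} and support Ξ = {ξ : Hξ ≤ d}, the worst-case expectation sup_{Q : d_W(P̂_N,Q) ≤ ε} E^Q[max_k(⟨a_k, ξ⟩ + b_k)] is bounded above by the optimal value of the finite program: minimize λε + (1/N)Σᵢ sᵢ subject to b_k + ⟨a_k, ξ̂ᵢ⟩ + ⟨γ_{ik}, d − Hξ̂ᵢ⟩ ≤ sᵢ, ‖H'γ_{ik} − a_k‖_* ≤ λ, γ_{ik} ≥ 0 for all i ≤ N and k ≤ K. In the special case Ξ = ℝ^m (H = 0, d = 0), the bound reads: for any λ ≥ max_k ‖a_k‖_* and sᵢ ≥ max_k(b_k + ⟨a_k, ξ̂ᵢ⟩), sup over Q in the Wasserstein ball of E^Q[max_k(⟨a_k,ξ⟩+b_k)] ≤ λε + (1/N)Σᵢ sᵢ.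 -/
/-!
The objective `g ξ = max_k (⟪a k, ξ⟫ + b k)` is a maximum of affine functions with slopes of norm
at most `λ`, hence `λ`-Lipschitz. Rescaled to a `1`-Lipschitz function, it is a competitor in the
Kantorovich–Rubinstein supremum defining `dW`, so for every `Q` in the ball
`E^Q g ≤ E^{P̂_N} g + λ ε = (1/N) Σᵢ g (ξ̂ᵢ) + λ ε`, and `g (ξ̂ᵢ) ≤ sᵢ` by feasibility.
-/

open MeasureTheory

/-- Dual (Kantorovich–Rubinstein) Wasserstein distance: supremum over
1-Lipschitz functions of the difference of integrals. -/
noncomputable def dW {E : Type*} [MeasurableSpace E] [NormedAddCommGroup E]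
    (μ ν : Measure E) : ℝ :=
  ⨆ f : {f : E → ℝ // LipschitzWith 1 f}, (∫ x, f.1 x ∂μ - ∫ x, f.1 x ∂ν)

open scoped NNReal ENNReal RealInnerProductSpace

theorem LipschitzWith.finset_sup' {α ι : Type*} [PseudoEMetricSpace α] {K : ℝ≥0}
    {s : Finset ι} (hs : s.Nonempty) {f : ι → α → ℝ} (hf : ∀ i ∈ s, LipschitzWith K (f i)) :
    LipschitzWith K fun x => s.sup' hs fun i => f i x := by
  have h := Finset.sup'_induction hs f (p := LipschitzWith K)
    (fun g hg h hh => by simpa only [max_self] using! hg.max hh) hf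
  convert h using 1
  exact funext fun x => (Finset.sup'_apply hs f x).symm

theorem lipschitzWith_finset_sup'_inner_add {E ι : Type*} [NormedAddCommGroup E]
    [InnerProductSpace ℝ E] {s : Finset ι} (hs : s.Nonempty) (a : ι → E) (b : ι → ℝ)
    {K : ℝ≥0} (ha : ∀ i ∈ s, ‖a i‖₊ ≤ K) :
    LipschitzWith K fun x => s.sup' hs fun i => ⟪a i, x⟫ + b i := by
  refine LipschitzWith.finset_sup' hs fun i hi => ?_
  simpa using ((innerSL ℝ (a i)).lipschitz.add (LipschitzWith.const (b i))).weaken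
    (K' := K) (by simpa [← NNReal.coe_le_coe] using ha i hi)

section Empirical

variable {α : Type*} [MeasurableSpace α] {N : ℕ}

noncomputable def empiricalMeasure (x : Fin N → α) : Measure α :=
  (N : ℝ≥0∞)⁻¹ • ∑ i, Measure.dirac (x i)

variable (x : Fin N → α)

instance [NeZero N] : IsProbabilityMeasure (empiricalMeasure x) := by
  constructor
  simp only [empiricalMeasure, Measure.smul_apply, Measure.finsetSum_apply, measure_univ,
    Finset.sum_const, Finset.card_univ, Fintype.card_fin, nsmul_eq_mul, mul_one, smul_eq_mul]
  exact ENNReal.inv_mul_cancel (by simp [NeZero.ne N]) (by simp)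

variable [MeasurableSingletonClass α]

theorem integrable_empiricalMeasure [NeZero N] {E : Type*} [NormedAddCommGroup E] (f : α → E) :
    Integrable f (empiricalMeasure x) :=
  (integrable_finsetSum_measure.2 fun i _ => integrable_dirac enorm_lt_top).smul_measure
    (by simp [NeZero.ne N])

theorem integral_empiricalMeasure {E : Type*} [NormedAddCommGroup E] [NormedSpace ℝ E]
    [CompleteSpace E] (f : α → E) :
    ∫ y, f y ∂empiricalMeasure x = (N : ℝ)⁻¹ • ∑ i, f (x i) := by
  rw [empiricalMeasure, integral_smul_measure,
    integral_finsetSum_measure fun i _ => integrable_dirac enorm_lt_top]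
  simp only [integral_dirac, ENNReal.toReal_inv, ENNReal.toReal_natCast]

end Empirical

theorem dW_self {E : Type*} [NormedAddCommGroup E] [MeasurableSpace E] (μ : Measure E) :
    dW μ μ = 0 := by
  simp [dW]

section Wasserstein

variable {E : Type*} [NormedAddCommGroup E] [MeasurableSpace E] [OpensMeasurableSpace E]
  {μ ν : Measure E} {f : E → ℝ} {K : ℝ≥0}

theorem LipschitzWith.integrable [IsFiniteMeasure μ] (hf : LipschitzWith K f)
    (hμ : Integrable (fun x => ‖x‖) μ) : Integrable f μ := by
  refine ((integrable_const ‖f 0‖).add (hμ.const_mul K)).mono'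
    hf.continuous.aestronglyMeasurable (ae_of_all _ fun x => ?_)
  calc ‖f x‖ ≤ ‖f 0‖ + ‖f x - f 0‖ := norm_le_norm_add_norm_sub' _ _
    _ ≤ ‖f 0‖ + K * ‖x‖ := by simpa using hf.norm_sub_le x 0

theorem LipschitzWith.integral_le_add_mul_integral_norm [IsProbabilityMeasure μ]
    (hf : LipschitzWith K f) (hμ : Integrable (fun x => ‖x‖) μ) :
    ∫ x, f x ∂μ ≤ f 0 + K * ∫ x, ‖x‖ ∂μ := by
  have hbound : Integrable (fun x => f 0 + K * ‖x‖) μ := (integrable_const _).add (hμ.const_mul _)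
  calc ∫ x, f x ∂μ ≤ ∫ x, (f 0 + K * ‖x‖) ∂μ :=
        integral_mono (hf.integrable hμ) hbound fun x => by
          simpa using hf.le_add_mul x 0
    _ = f 0 + K * ∫ x, ‖x‖ ∂μ := by
        rw [integral_add (integrable_const _) (hμ.const_mul _), integral_const,
          integral_const_mul]
        simp

-- Without this bound `le_ciSup` is unavailable: an unbounded `⨆` in `ℝ` is the junk value `0`.
theorem bddAbove_integral_sub_integral [IsProbabilityMeasure μ] [IsProbabilityMeasure ν]
    (hμ : Integrable (fun x => ‖x‖) μ) (hν : Integrable (fun x => ‖x‖) ν) :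
    BddAbove (Set.range fun f : {f : E → ℝ // LipschitzWith 1 f} =>
      ∫ x, f.1 x ∂μ - ∫ x, f.1 x ∂ν) := by
  refine ⟨∫ x, ‖x‖ ∂μ + ∫ x, ‖x‖ ∂ν, ?_⟩
  rintro _ ⟨⟨f, hf⟩, rfl⟩
  have hfμ := hf.integral_le_add_mul_integral_norm hμ
  have hfν := hf.neg.integral_le_add_mul_integral_norm hν
  simp only [Pi.neg_apply, integral_neg, NNReal.coe_one, one_mul] at hfμ hfν
  linarith

theorem integral_sub_integral_le_dW [IsProbabilityMeasure μ] [IsProbabilityMeasure ν]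
    (hμ : Integrable (fun x => ‖x‖) μ) (hν : Integrable (fun x => ‖x‖) ν)
    (hf : LipschitzWith 1 f) : ∫ x, f x ∂μ - ∫ x, f x ∂ν ≤ dW μ ν :=
  le_ciSup (f := fun f : {f : E → ℝ // LipschitzWith 1 f} => ∫ x, f.1 x ∂μ - ∫ x, f.1 x ∂ν)
    (bddAbove_integral_sub_integral hμ hν) ⟨f, hf⟩

theorem LipschitzWith.integral_sub_integral_le_mul_dW [IsProbabilityMeasure μ]
    [IsProbabilityMeasure ν] (hf : LipschitzWith K f) (hμ : Integrable (fun x => ‖x‖) μ)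
    (hν : Integrable (fun x => ‖x‖) ν) : ∫ x, f x ∂ν - ∫ x, f x ∂μ ≤ K * dW μ ν := by
  rcases eq_or_ne K 0 with rfl | hK
  · obtain ⟨c, rfl⟩ : ∃ c, f = fun _ => c :=
      ⟨f 0, funext fun x => dist_le_zero.1 (by simpa using hf.dist_le_mul x 0)⟩
    simp
  have hK' : (0 : ℝ) < K := by positivity
  have hg : LipschitzWith 1 fun x => (K : ℝ)⁻¹ * f x := by
    simpa [hK, Function.comp_def] using (lipschitzWith_smul ((K : ℝ)⁻¹)).comp hf
  have h := integral_sub_integral_le_dW hμ hν hg.neg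
  simp only [Pi.neg_apply, integral_neg, integral_const_mul] at h
  calc ∫ x, f x ∂ν - ∫ x, f x ∂μ = K * ((K : ℝ)⁻¹ * (∫ x, f x ∂ν - ∫ x, f x ∂μ)) := by
        field_simp
    _ ≤ K * dW μ ν := by gcongr; linarith

end Wasserstein

/-- Weak duality for the DRO inner problem in the unconstrained-support case
`Ξ = ℝ^m`: for any feasible `(λ, s)` of the dual finite program, the worst-case
expectation over the Wasserstein ball is bounded by `λε + (1/N)Σᵢ sᵢ`. -/
theorem dro_weak_duality {m N K : ℕ} [Nonempty (Fin N)] [Nonempty (Fin K)]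
    (xi : Fin N → EuclideanSpace ℝ (Fin m))
    (a : Fin K → EuclideanSpace ℝ (Fin m)) (b : Fin K → ℝ)
    (ε lam : ℝ) (hε : 0 ≤ ε) (s : Fin N → ℝ)
    (hlam : ∀ k, ‖a k‖ ≤ lam)
    (hs : ∀ i k, b k + (inner ℝ (a k) (xi i) : ℝ) ≤ s i) :
    (⨆ Q : {Q : Measure (EuclideanSpace ℝ (Fin m)) // IsProbabilityMeasure Q ∧
        Integrable (fun x => ‖x‖) Q ∧
        dW ((N : ENNReal)⁻¹ • ∑ i : Fin N, Measure.dirac (xi i)) Q ≤ ε},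
      ∫ ξ, (Finset.univ.sup' Finset.univ_nonempty
          fun k => (inner ℝ (a k) ξ : ℝ) + b k) ∂(Q.1)) ≤
      lam * ε + (1 / (N : ℝ)) * ∑ i, s i := by
  have : NeZero N := NeZero.of_pos (Fin.pos_iff_nonempty.2 ‹_›)
  obtain ⟨k₀⟩ := ‹Nonempty (Fin K)›
  have hlam₀ : 0 ≤ lam := (norm_nonneg _).trans (hlam k₀)
  set g := fun ξ => Finset.univ.sup' Finset.univ_nonempty fun k => ⟪a k, ξ⟫ + b k
  have hg : LipschitzWith lam.toNNReal g :=
    lipschitzWith_finset_sup'_inner_add _ a b fun k _ => by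
      simpa using Real.toNNReal_le_toNNReal (hlam k)
  have hμ : Integrable (fun x => ‖x‖) (empiricalMeasure xi) := integrable_empiricalMeasure xi _
  have hmean : ∫ ξ, g ξ ∂empiricalMeasure xi ≤ (1 / (N : ℝ)) * ∑ i, s i := by
    rw [integral_empiricalMeasure, smul_eq_mul, one_div]
    gcongr with i
    exact Finset.sup'_le _ _ fun k _ => by linarith [hs i k]
  refine @ciSup_le _ _ _ ⟨⟨empiricalMeasure xi, inferInstance, hμ, (dW_self _).le.trans hε⟩⟩
    _ _ ?_
  rintro ⟨Q, hQ, hQμ, hQε⟩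
  have htransport := hg.integral_sub_integral_le_mul_dW hμ hQμ
  rw [Real.coe_toNNReal _ hlam₀] at htransport
  have hball : lam * dW (empiricalMeasure xi) Q ≤ lam * ε := mul_le_mul_of_nonneg_left hQε hlam₀
  dsimp only
  linarith
end
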